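/- arXiv:1506.00242 — 2 statements merged into one kernel-verified Lean document; each statement's English description precedes it below -/
import Mathlib

section
/- Let V be a finite vertex set partitioned into a protected set P and a targeted set T, and let G, G' be two simple graphs on V that are neighboring with respect to (P,T), i.e. G' is obtained from G by arbitrarily rewiring the edges incident to a single vertex of P. Then for every seed vertex t ∈ T, the deterministic statistic-first search algorithm produces exactly the same output list on both inputs: SFS(G, t) = SFS(G', t). Consequently SFS satisfies 0-protected differential privacy. -/
open scoped Classical

/-- Two simple graphs on `V` are *neighboring* with respect to a protected set `P`
if one can be obtained from the other by arbitrarily rewiring the edges incident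
to a single protected vertex `v ∈ P`. -/
def Neighboring {V : Type*} (P : Finset V) (G G' : SimpleGraph V) : Prop :=
  ∃ v ∈ P, ∀ a b : V, a ≠ v → b ≠ v → (G.Adj a b ↔ G'.Adj a b)

/-- Deterministically select the vertex of `N` maximizing the score, breaking
ties by taking the least such vertex in the linear order on `V`. -/
noncomputable def pickMax {V : Type*} [LinearOrder V] {β : Type*} [LinearOrder β]
    (N : Finset V) (score : V → β) (h : N.Nonempty) : V :=
  (N.filter fun x => ∀ y ∈ N, score y ≤ score x).min' (by
    obtain ⟨b, hb, hmax⟩ := N.exists_max_image score h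
    exact ⟨b, Finset.mem_filter.mpr ⟨hb, fun y hy => hmax y hy⟩⟩)

/-- One pass of statistic-first search, with enough fuel to exhaust the vertex
set.  The state consists of the ordered list `Ttil` of discovered targeted
vertices and the set `I` of examined vertices.  While some neighbor of the
discovered targeted set is unexamined, the unexamined neighbor `v'` maximizing
the number of edges to the discovered targeted set is examined: it is added to
`I`, and appended to `Ttil` whenever the membership oracle reports `v' ∈ T`.
When all neighbors of `Ttil` have been examined, the list `Ttil` is output. -/
noncomputable def SFSAux {V : Type*} [Fintype V] [LinearOrder V]
    (G : SimpleGraph V) (T : Finset V) :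
    ℕ → List V → Finset V → List V
  | 0, Ttil, _ => Ttil
  | n + 1, Ttil, I =>
    let N : Finset V :=
      Finset.univ.filter fun x => x ∉ I ∧ ∃ u ∈ Ttil, G.Adj u x
    if h : N.Nonempty then
      let score : V → ℕ := fun x => (Ttil.toFinset.filter fun u => G.Adj u x).card
      let v' := pickMax N score h
      if v' ∈ T then SFSAux G T n (Ttil ++ [v']) (insert v' I)
      else SFSAux G T n Ttil (insert v' I)
    else Ttil

/-- Statistic-first search `SFS(G, t)` started from a known targeted seed
vertex `t`.  Since each loop iteration examines a new vertex, `Fintype.card V`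
steps of fuel always suffice for the search to halt on its own. -/
noncomputable def SFS {V : Type*} [Fintype V] [LinearOrder V]
    (G : SimpleGraph V) (T : Finset V) (t : V) : List V :=
  SFSAux G T (Fintype.card V) [t] {t}

section Helpers
variable {V : Type*} [LinearOrder V] {β : Type*} [LinearOrder β]

lemma pickMax_mem_filter (N : Finset V) (score : V → β) (h : N.Nonempty) :
    pickMax N score h ∈ N.filter fun x => ∀ y ∈ N, score y ≤ score x := by
  unfold pickMax
  exact Finset.min'_mem _ _

lemma pickMax_mem (N : Finset V) (score : V → β) (h : N.Nonempty) :
    pickMax N score h ∈ N :=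
  (Finset.mem_filter.mp (pickMax_mem_filter N score h)).1

lemma min'_congr (s t : Finset V) (hst : s = t) (hs : s.Nonempty) (ht : t.Nonempty) :
    s.min' hs = t.min' ht := by subst hst; rfl

lemma pickMax_congr (N N' : Finset V) (s s' : V → β) (h : N.Nonempty) (h' : N'.Nonempty)
    (hNN : N = N') (hs : ∀ x ∈ N, s x = s' x) : pickMax N s h = pickMax N' s' h' := by
  subst hNN
  unfold pickMax
  apply min'_congr
  ext x
  simp only [Finset.mem_filter, and_congr_right_iff]
  intro hx
  constructor
  · intro H y hy; rw [← hs y hy, ← hs x hx]; exact H y hy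
  · intro H y hy; rw [hs y hy, hs x hx]; exact H y hy

lemma pickMax_erase (N : Finset V) (score : V → β)
    (h : N.Nonempty) (v : V) (hne : pickMax N score h ≠ v)
    (h' : (N.erase v).Nonempty) :
    pickMax (N.erase v) score h' = pickMax N score h := by
  have hpf := pickMax_mem_filter N score h
  have hpN : pickMax N score h ∈ N := (Finset.mem_filter.mp hpf).1
  have hpmax : ∀ y ∈ N, score y ≤ score (pickMax N score h) := (Finset.mem_filter.mp hpf).2
  have hSS' : ((N.erase v).filter fun x => ∀ y ∈ N.erase v, score y ≤ score x)
      = (N.filter fun x => ∀ y ∈ N, score y ≤ score x).erase v := by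
    ext x
    constructor
    · intro hx
      have hx1 := (Finset.mem_filter.mp hx).1
      have hmax := (Finset.mem_filter.mp hx).2
      have hxv := (Finset.mem_erase.mp hx1).1
      have hxN := (Finset.mem_erase.mp hx1).2
      refine Finset.mem_erase.mpr ⟨hxv, Finset.mem_filter.mpr ⟨hxN, fun y hy => ?_⟩⟩
      by_cases hyv : y = v
      · calc score y ≤ score (pickMax N score h) := hpmax y hy
          _ ≤ score x := hmax _ (Finset.mem_erase.mpr ⟨hne, hpN⟩)
      · exact hmax y (Finset.mem_erase.mpr ⟨hyv, hy⟩)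
    · intro hx
      have hxv := (Finset.mem_erase.mp hx).1
      have hx2 := Finset.mem_filter.mp (Finset.mem_erase.mp hx).2
      exact Finset.mem_filter.mpr ⟨Finset.mem_erase.mpr ⟨hxv, hx2.1⟩,
        fun y hy => hx2.2 y (Finset.mem_erase.mp hy).2⟩
  have hqf := pickMax_mem_filter (N.erase v) score h'
  rw [hSS'] at hqf
  have hqS := Finset.mem_of_mem_erase hqf
  have hpq : pickMax N score h ≤ pickMax (N.erase v) score h' := by
    unfold pickMax
    exact Finset.min'_le _ _ hqS
  have hpS' : pickMax N score h ∈
      ((N.erase v).filter fun x => ∀ y ∈ N.erase v, score y ≤ score x) := by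
    rw [hSS']; exact Finset.mem_erase.mpr ⟨hne, hpf⟩
  have hqp : pickMax (N.erase v) score h' ≤ pickMax N score h := by
    unfold pickMax
    exact Finset.min'_le _ _ hpS'
  exact le_antisymm hqp hpq

end Helpers

section Main
variable {V : Type*} [Fintype V] [LinearOrder V]

lemma sfsAux_succ (G : SimpleGraph V) (T : Finset V) (n : ℕ) (Ttil : List V) (I : Finset V) :
    SFSAux G T (n + 1) Ttil I =
      if h : (Finset.univ.filter fun x => x ∉ I ∧ ∃ u ∈ Ttil, G.Adj u x).Nonempty then
        if pickMax (Finset.univ.filter fun x => x ∉ I ∧ ∃ u ∈ Ttil, G.Adj u x)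
            (fun x => (Ttil.toFinset.filter fun u => G.Adj u x).card) h ∈ T then
          SFSAux G T n
            (Ttil ++ [pickMax (Finset.univ.filter fun x => x ∉ I ∧ ∃ u ∈ Ttil, G.Adj u x)
              (fun x => (Ttil.toFinset.filter fun u => G.Adj u x).card) h])
            (insert (pickMax (Finset.univ.filter fun x => x ∉ I ∧ ∃ u ∈ Ttil, G.Adj u x)
              (fun x => (Ttil.toFinset.filter fun u => G.Adj u x).card) h) I)
        else SFSAux G T n Ttil
            (insert (pickMax (Finset.univ.filter fun x => x ∉ I ∧ ∃ u ∈ Ttil, G.Adj u x)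
              (fun x => (Ttil.toFinset.filter fun u => G.Adj u x).card) h) I)
      else Ttil := by
  rw [SFSAux]

lemma card_sdiff_insert_lt {I : Finset V} {p : V} (hp : p ∉ I) :
    (Finset.univ \ insert p I).card < (Finset.univ \ I).card := by
  apply Finset.card_lt_card
  constructor
  · intro x hx
    simp only [Finset.mem_sdiff, Finset.mem_univ, Finset.mem_insert, not_or, true_and] at hx ⊢
    exact hx.2
  · intro hsub
    have h1 : p ∈ Finset.univ \ I := by simp [hp]
    have h2 := hsub h1
    simp at h2

/-- Fuel irrelevance. -/
lemma sfsAux_fuel (G : SimpleGraph V) (T : Finset V) :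
    ∀ n (Ttil : List V) (I : Finset V), (Finset.univ \ I).card ≤ n →
      SFSAux G T (n + 1) Ttil I = SFSAux G T n Ttil I := by
  intro n
  induction n with
  | zero =>
    intro Ttil I hI
    have hIuniv : ∀ x : V, x ∈ I := by
      intro x
      by_contra hx
      have hmem : x ∈ Finset.univ \ I := by simp [hx]
      have := Finset.card_pos.mpr ⟨x, hmem⟩
      omega
    rw [sfsAux_succ, dif_neg]
    · rfl
    · rintro ⟨x, hx⟩
      exact (Finset.mem_filter.mp hx).2.1 (hIuniv x)
  | succ n ih =>
    intro Ttil I hI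
    rw [sfsAux_succ, sfsAux_succ]
    by_cases hNe : (Finset.univ.filter fun x => x ∉ I ∧ ∃ u ∈ Ttil, G.Adj u x).Nonempty
    · rw [dif_pos hNe, dif_pos hNe]
      set p := pickMax (Finset.univ.filter fun x => x ∉ I ∧ ∃ u ∈ Ttil, G.Adj u x)
        (fun x => (Ttil.toFinset.filter fun u => G.Adj u x).card) hNe with hp
      have hpN : p ∈ Finset.univ.filter fun x => x ∉ I ∧ ∃ u ∈ Ttil, G.Adj u x :=
        pickMax_mem _ _ hNe
      have hpI : p ∉ I := (Finset.mem_filter.mp hpN).2.1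
      have hcard : (Finset.univ \ insert p I).card ≤ n := by
        have := card_sdiff_insert_lt hpI
        omega
      by_cases hpT : p ∈ T
      · rw [if_pos hpT, if_pos hpT]; exact ih _ _ hcard
      · rw [if_neg hpT, if_neg hpT]; exact ih _ _ hcard
    · rw [dif_neg hNe, dif_neg hNe]

/-- Inserting the protected vertex into the examined set does not change the output. -/
lemma sfsAux_insert (G : SimpleGraph V) (T : Finset V) (v : V) (hv : v ∉ T) :
    ∀ n (Ttil : List V) (I : Finset V), (∀ u ∈ Ttil, u ∈ T) →
      (Finset.univ \ I).card ≤ n →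
      SFSAux G T n Ttil I = SFSAux G T n Ttil (insert v I) := by
  intro n
  induction n with
  | zero => intros; rfl
  | succ n ih =>
    intro Ttil I hT hI
    by_cases hvI : v ∈ I
    · rw [Finset.insert_eq_self.mpr hvI]
    rw [sfsAux_succ]
    have hM : (Finset.univ.filter fun x => x ∉ insert v I ∧ ∃ u ∈ Ttil, G.Adj u x)
        = (Finset.univ.filter fun x => x ∉ I ∧ ∃ u ∈ Ttil, G.Adj u x).erase v := by
      ext x
      simp only [Finset.mem_erase, Finset.mem_filter, Finset.mem_univ, true_and,
        Finset.mem_insert, not_or]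
      tauto
    by_cases hNe : (Finset.univ.filter fun x => x ∉ I ∧ ∃ u ∈ Ttil, G.Adj u x).Nonempty
    · rw [dif_pos hNe]
      set N := Finset.univ.filter fun x => x ∉ I ∧ ∃ u ∈ Ttil, G.Adj u x with hNdef
      set score : V → ℕ := fun x => (Ttil.toFinset.filter fun u => G.Adj u x).card with hscore
      set p := pickMax N score hNe with hp
      have hpN : p ∈ N := pickMax_mem _ _ _
      have hpI : p ∉ I := (Finset.mem_filter.mp hpN).2.1
      have hcard : (Finset.univ \ insert p I).card ≤ n := by
        have := card_sdiff_insert_lt hpI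
        omega
      by_cases hpv : p = v
      · rw [if_neg (by rw [hpv]; exact hv), hpv]
        rw [sfsAux_fuel G T n Ttil (insert v I) (by rw [← hpv]; exact hcard)]
      · have hpM : p ∈ N.erase v := Finset.mem_erase.mpr ⟨hpv, hpN⟩
        have hMe : (N.erase v).Nonempty := ⟨p, hpM⟩
        have hMe' : (Finset.univ.filter fun x => x ∉ insert v I ∧ ∃ u ∈ Ttil, G.Adj u x).Nonempty := by
          rw [hM]; exact hMe
        rw [sfsAux_succ, dif_pos hMe']
        have hpick : pickMax (Finset.univ.filter fun x => x ∉ insert v I ∧ ∃ u ∈ Ttil, G.Adj u x)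
            (fun x => (Ttil.toFinset.filter fun u => G.Adj u x).card) hMe' = p := by
          rw [hp]
          have h2 := pickMax_erase N score hNe v (by rw [← hp]; exact hpv) hMe
          rw [← h2]
          exact pickMax_congr _ _ _ _ _ _ hM (fun x _ => rfl)
        rw [hpick]
        have hII : insert p (insert v I) = insert v (insert p I) := Finset.insert_comm _ _ _
        by_cases hpT : p ∈ T
        · rw [if_pos hpT, if_pos hpT, hII]
          exact ih (Ttil ++ [p]) (insert p I)
            (by intro u hu; rcases List.mem_append.mp hu with h1 | h1
                · exact hT u h1
                · simp only [List.mem_singleton] at h1; subst h1; exact hpT) hcard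
        · rw [if_neg hpT, if_neg hpT, hII]
          exact ih Ttil (insert p I) hT hcard
    · rw [dif_neg hNe, sfsAux_succ, dif_neg
        (by rw [hM]; rintro ⟨x, hx⟩; exact hNe ⟨x, Finset.mem_of_mem_erase hx⟩)]

/-- Once the protected vertex is examined, the two graphs behave identically. -/
lemma sfsAux_congr (G G' : SimpleGraph V) (T : Finset V) (v : V) (hv : v ∉ T)
    (hsame : ∀ a b : V, a ≠ v → b ≠ v → (G.Adj a b ↔ G'.Adj a b)) :
    ∀ n (Ttil : List V) (I : Finset V), (∀ u ∈ Ttil, u ∈ T) → v ∈ I →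
      SFSAux G T n Ttil I = SFSAux G' T n Ttil I := by
  intro n
  induction n with
  | zero => intros; rfl
  | succ n ih =>
    intro Ttil I hT hvI
    have hNN : (Finset.univ.filter fun x => x ∉ I ∧ ∃ u ∈ Ttil, G.Adj u x)
        = (Finset.univ.filter fun x => x ∉ I ∧ ∃ u ∈ Ttil, G'.Adj u x) := by
      ext x
      simp only [Finset.mem_filter, Finset.mem_univ, true_and]
      constructor
      · rintro ⟨hxI, u, hu, hadj⟩
        have hxv : x ≠ v := fun hh => hxI (hh ▸ hvI)
        have huv : u ≠ v := fun hh => hv (hh ▸ hT u hu)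
        exact ⟨hxI, u, hu, (hsame u x huv hxv).mp hadj⟩
      · rintro ⟨hxI, u, hu, hadj⟩
        have hxv : x ≠ v := fun hh => hxI (hh ▸ hvI)
        have huv : u ≠ v := fun hh => hv (hh ▸ hT u hu)
        exact ⟨hxI, u, hu, (hsame u x huv hxv).mpr hadj⟩
    rw [sfsAux_succ, sfsAux_succ]
    by_cases hNe : (Finset.univ.filter fun x => x ∉ I ∧ ∃ u ∈ Ttil, G.Adj u x).Nonempty
    · have hNe' : (Finset.univ.filter fun x => x ∉ I ∧ ∃ u ∈ Ttil, G'.Adj u x).Nonempty := by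
        rw [← hNN]; exact hNe
      rw [dif_pos hNe, dif_pos hNe']
      have hpick : pickMax (Finset.univ.filter fun x => x ∉ I ∧ ∃ u ∈ Ttil, G.Adj u x)
            (fun x => (Ttil.toFinset.filter fun u => G.Adj u x).card) hNe
          = pickMax (Finset.univ.filter fun x => x ∉ I ∧ ∃ u ∈ Ttil, G'.Adj u x)
            (fun x => (Ttil.toFinset.filter fun u => G'.Adj u x).card) hNe' := by
        apply pickMax_congr _ _ _ _ _ _ hNN
        intro x hx
        have hxI : x ∉ I := (Finset.mem_filter.mp hx).2.1
        have hxv : x ≠ v := fun hh => hxI (hh ▸ hvI)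
        congr 1
        apply Finset.filter_congr
        intro u hu
        have huT : u ∈ T := hT u (List.mem_toFinset.mp hu)
        have huv : u ≠ v := fun hh => hv (hh ▸ huT)
        exact hsame u x huv hxv
      rw [hpick]
      set p := pickMax (Finset.univ.filter fun x => x ∉ I ∧ ∃ u ∈ Ttil, G'.Adj u x)
            (fun x => (Ttil.toFinset.filter fun u => G'.Adj u x).card) hNe' with hpdef
      by_cases hpT : p ∈ T
      · rw [if_pos hpT, if_pos hpT]
        exact ih (Ttil ++ [p]) (insert p I)
          (by intro u hu; rcases List.mem_append.mp hu with h1 | h1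
              · exact hT u h1
              · simp only [List.mem_singleton] at h1; subst h1; exact hpT)
          (Finset.mem_insert_of_mem hvI)
      · rw [if_neg hpT, if_neg hpT]
        exact ih Ttil (insert p I) hT (Finset.mem_insert_of_mem hvI)
    · rw [dif_neg hNe, dif_neg (by rw [← hNN]; exact hNe)]

end Main

/-- Statistic-first search satisfies `0`-protected differential privacy: for
every partition of `V` into a protected set `P` and a targeted set `T`, every
pair of graphs `G, G'` neighboring with respect to `(P, T)`, and every seed
vertex `t ∈ T`, the deterministic algorithm `SFS` produces exactly the same
output list on both inputs. -/
theorem sfs_zero_protected_dp {V : Type*} [Fintype V] [LinearOrder V]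
    (P T : Finset V) (hPT : ∀ x : V, x ∈ P ↔ x ∉ T)
    (G G' : SimpleGraph V) (hN : Neighboring P G G')
    (t : V) (ht : t ∈ T) :
    SFS G T t = SFS G' T t := by
  obtain ⟨v, hvP, hsame⟩ := hN
  have hv : v ∉ T := (hPT v).mp hvP
  have hfuel : (Finset.univ \ ({t} : Finset V)).card ≤ Fintype.card V :=
    le_of_le_of_eq (Finset.card_le_card Finset.sdiff_subset) Finset.card_univ
  have hT1 : ∀ u ∈ [t], u ∈ T := by
    intro u hu
    simp only [List.mem_singleton] at hu
    subst hu
    exact ht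
  unfold SFS
  rw [sfsAux_insert G T v hv _ [t] {t} hT1 hfuel,
      sfsAux_insert G' T v hv _ [t] {t} hT1 hfuel,
      sfsAux_congr G G' T v hv hsame _ [t] (insert v {t}) hT1 (Finset.mem_insert_self v _)]
end

section
/- Let f : X^n → ℝ be a function of databases with sensitivity Δ(f) = max over neighboring databases D ∼ D' of |f(D) − f(D')|, where databases are neighboring if they differ in at most one data record. For ε > 0, the Laplace mechanism, which on input D outputs f(D) + ν with ν drawn from the Laplace distribution Lap(Δ(f)/ε), is ε-differentially private: for every pair of neighboring databases D, D' and every measurable set S ⊆ ℝ, Pr[f(D) + ν ∈ S] ≤ e^ε · Pr[f(D') + ν ∈ S]. -/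
/-!
Translating the Laplace density by `c` changes it pointwise by a factor of at most
`exp (|c - c'| / b)` relative to its translate by `c'`, by the triangle inequality in the
exponent. An inequality between densities is an inequality between the measures, so it holds
on every set. For neighboring databases `|f D - f D'| ≤ Δ(f) = ε b`, so the factor is at most `e^ε`.
-/

open MeasureTheory

/-- Two databases `D, D' : Fin n → X` are neighbors if they differ in at most
one data record. -/
def NeighborDB {X : Type*} {n : ℕ} (D D' : Fin n → X) : Prop :=
  ∃ i : Fin n, ∀ j : Fin n, j ≠ i → D j = D' j

/-- The sensitivity of `f`, `Δ(f) = max_{D ∼ D'} |f D − f D'|` over neighboring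
databases. -/
noncomputable def sensitivity {X : Type*} {n : ℕ} (f : (Fin n → X) → ℝ) : ℝ :=
  sSup {x : ℝ | ∃ D D' : Fin n → X, NeighborDB D D' ∧ x = |f D - f D'|}

/-- The Laplace distribution `Lap(b)` centered at `0`, with density
`(1/(2b))·exp(−|x|/b)` with respect to Lebesgue measure. -/
noncomputable def laplace (b : ℝ) : Measure ℝ :=
  volume.withDensity fun x => ENNReal.ofReal ((1 / (2 * b)) * Real.exp (-|x| / b))

/-- The Laplace mechanism for `f`, which on input `D` outputs `f(D) + ν` with
`ν ∼ Lap(Δ(f)/ε)`. -/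
noncomputable def laplaceMechanism {X : Type*} {n : ℕ} (f : (Fin n → X) → ℝ) (ε : ℝ)
    (D : Fin n → X) : Measure ℝ :=
  (laplace (sensitivity f / ε)).map fun ν => f D + ν

open Real

noncomputable def laplacePDF (b x : ℝ) : ℝ := 1 / (2 * b) * exp (-|x| / b)

-- `b = 0` included: then `1 / (2 * b) = 0`.
lemma laplacePDF_nonpos {b : ℝ} (hb : b ≤ 0) (x : ℝ) : laplacePDF b x ≤ 0 :=
  mul_nonpos_of_nonpos_of_nonneg (by rw [one_div, inv_nonpos]; linarith) (exp_nonneg _)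

lemma laplacePDF_sub_le {b : ℝ} (hb : 0 < b) (c c' x : ℝ) :
    laplacePDF b (x - c) ≤ exp (|c - c'| / b) * laplacePDF b (x - c') := by
  have htri : |x - c'| ≤ |x - c| + |c - c'| := abs_sub_le x c c'
  have hexp : -|x - c| / b ≤ |c - c'| / b + -|x - c'| / b := by
    rw [← add_div]; gcongr; linarith
  calc laplacePDF b (x - c) ≤ 1 / (2 * b) * exp (|c - c'| / b + -|x - c'| / b) := by
        unfold laplacePDF; gcongr
    _ = exp (|c - c'| / b) * laplacePDF b (x - c') := by
        rw [laplacePDF, exp_add]; ring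

lemma laplace_of_nonpos {b : ℝ} (hb : b ≤ 0) : laplace b = 0 := by
  have hzero : (fun x => ENNReal.ofReal (laplacePDF b x)) = 0 :=
    funext fun x => ENNReal.ofReal_of_nonpos (laplacePDF_nonpos hb x)
  exact (congrArg volume.withDensity hzero).trans withDensity_zero

lemma laplace_map_const_add (b c : ℝ) :
    (laplace b).map (c + ·) = volume.withDensity fun x => ENNReal.ofReal (laplacePDF b (x - c)) := by
  ext s hs
  rw [Measure.map_apply (measurable_const_add c) hs, laplace, withDensity_apply _ hs,
    withDensity_apply _ (hs.preimage (measurable_const_add c)),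
    ← (measurePreserving_add_left volume c).setLIntegral_comp_preimage_emb
      (measurableEmbedding_addLeft c) (fun x => ENNReal.ofReal (laplacePDF b (x - c))) s]
  simp only [add_sub_cancel_left, laplacePDF]

lemma laplace_map_const_add_le_smul {b : ℝ} (hb : 0 < b) (c c' : ℝ) :
    (laplace b).map (c + ·) ≤ ENNReal.ofReal (exp (|c - c'| / b)) • (laplace b).map (c' + ·) := by
  rw [laplace_map_const_add, laplace_map_const_add, ← withDensity_smul' _ _ ENNReal.ofReal_ne_top]
  refine withDensity_mono (Filter.Eventually.of_forall fun x => ?_)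
  rw [Pi.smul_apply, smul_eq_mul, ← ENNReal.ofReal_mul (exp_nonneg _)]
  exact ENNReal.ofReal_le_ofReal (laplacePDF_sub_le hb c c' x)

lemma abs_sub_le_sensitivity {X : Type*} {n : ℕ} {f : (Fin n → X) → ℝ} (hf : sensitivity f ≠ 0)
    {D D' : Fin n → X} (hDD' : NeighborDB D D') : |f D - f D'| ≤ sensitivity f := by
  have hbdd : BddAbove {x : ℝ | ∃ D D' : Fin n → X, NeighborDB D D' ∧ x = |f D - f D'|} := by
    by_contra h
    exact hf (Real.sSup_of_not_bddAbove h)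
  exact le_csSup hbdd ⟨D, D', hDD', rfl⟩

theorem laplaceMechanism_dp_general {X : Type*} {n : ℕ} (f : (Fin n → X) → ℝ)
    (ε : ℝ)
    (D D' : Fin n → X) (hDD' : NeighborDB D D')
    (S : Set ℝ) :
    laplaceMechanism f ε D S ≤ ENNReal.ofReal (Real.exp ε) * laplaceMechanism f ε D' S := by
  set b := sensitivity f / ε with hb_def
  rcases le_or_gt b 0 with hb | hb
  -- covers `ε ≤ 0` and a zero sensitivity, junk value `sSup = 0` of an unbounded set included
  · simp [laplaceMechanism, ← hb_def, laplace_of_nonpos hb]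
  have hε : ε ≠ 0 := by rintro rfl; simp [b] at hb
  have hf : sensitivity f ≠ 0 := by rintro h; simp [b, h] at hb
  have hshift : |f D - f D'| / b ≤ ε := by
    rw [div_le_iff₀ hb, hb_def, mul_div_cancel₀ _ hε]
    exact abs_sub_le_sensitivity hf hDD'
  calc laplaceMechanism f ε D S
      ≤ (ENNReal.ofReal (exp (|f D - f D'| / b)) • laplaceMechanism f ε D') S :=
        laplace_map_const_add_le_smul hb (f D) (f D') S
    _ ≤ ENNReal.ofReal (exp ε) * laplaceMechanism f ε D' S := by
        rw [Measure.smul_apply, smul_eq_mul]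
        gcongr

/-- The Laplace mechanism is `ε`-differentially private: for every `ε > 0`,
every pair of neighboring databases `D, D'`, and every measurable `S ⊆ ℝ`,
`Pr[f(D) + ν ∈ S] ≤ e^ε · Pr[f(D') + ν ∈ S]` where `ν ∼ Lap(Δ(f)/ε)`. -/
theorem laplaceMechanism_dp {X : Type*} {n : ℕ} (f : (Fin n → X) → ℝ)
    (ε : ℝ) (hε : 0 < ε)
    (D D' : Fin n → X) (hDD' : NeighborDB D D')
    (S : Set ℝ) (hS : MeasurableSet S) :
    laplaceMechanism f ε D S ≤ ENNReal.ofReal (Real.exp ε) * laplaceMechanism f ε D' S :=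
  laplaceMechanism_dp_general f ε D D' hDD' S
end
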